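/- arXiv:2504.14599 — 2 statements merged into one kernel-verified Lean document; each statement's English description precedes it below -/
import Mathlib

section
/- One has t(3) + 2·t(2,1) = 2·t(2)·log(2), where t(3) = Σ_{m ≥ 1 odd} 1/m³, t(2) = Σ_{m ≥ 1 odd} 1/m² = π²/8, and t(2,1) = Σ_{m₁ > m₂ > 0, m₁, m₂ odd} 1/(m₁² m₂). -/
/-!
Consider the Mordell–Tornheim sums `W = Σ 1/(mn(m+n))` over `m` odd, `n` even, and
`Z = Σ 1/(mn(m+n))` over `m, n` odd. The partial fractions
`1/(mn(m+n)) = (1/m²)(1/n - 1/(m+n)) = (1/(m+n)²)(1/m + 1/n)` let us sum them along rows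
(`m` fixed), columns (`n` fixed) and antidiagonals (`m + n` fixed). Rows and columns telescope,
and `log 2 = Σ (1/(2j+1) - 1/(2j+2))` appears whenever the telescoping shift is odd.
With `Q = Σ_{m > n, m odd, n even} 1/(m²n)`:
* rows of `W`: `W = t(2,1) + t(3) - t(2) log 2`;
* antidiagonals of `W`: `W = t(2,1) + Q`;
* rows of `Z`: `Z = t(2) log 2 + Q`;
* antidiagonals of `Z` against columns of `W`: `Z = 2W`.
Eliminating `W`, `Z` and `Q` gives `t(3) + 2t(2,1) = 2t(2) log 2`.
-/

/-- Multiple t-value of level `N` with residue `a`: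
`t_{N,a}(k) = Σ_{m₁ > ⋯ > mₙ > 0, mᵢ ≡ a (mod N)} 1/(m₁^{k₁} ⋯ mₙ^{kₙ})`. -/
noncomputable def tv (N a : ℕ) (k : List ℕ) : ℝ :=
  ∑' m : {f : Fin k.length → ℕ // StrictAnti f ∧ ∀ i, 0 < f i ∧ f i % N = a % N},
    ∏ i : Fin k.length, ((m.1 i : ℝ) ^ k.get i)⁻¹

open Filter Topology Finset

theorem Antitone.hasSum_sub_succ {f : ℕ → ℝ} (hf : Antitone f)
    (hlim : Tendsto f atTop (𝓝 0)) : HasSum (fun n => f n - f (n + 1)) (f 0) := by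
  rw [hasSum_iff_tendsto_nat_of_nonneg fun n => sub_nonneg.2 (hf n.le_succ)]
  simp_rw [Finset.sum_range_sub']
  simpa using tendsto_const_nhds.sub hlim

theorem Antitone.hasSum_sub_add {f : ℕ → ℝ} (hf : Antitone f) (hlim : Tendsto f atTop (𝓝 0))
    (h : ℕ) : HasSum (fun n => f n - f (n + h)) (∑ k ∈ range h, f k) := by
  induction h with
  | zero => simp [hasSum_zero]
  | succ h ih =>
    have hshift : Antitone (f <| · + h) := fun a b hab => hf (by omega)
    have step : HasSum (fun n => f (n + h) - f (n + 1 + h)) (f h) := by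
      simpa using hshift.hasSum_sub_succ (hlim.comp (tendsto_add_atTop_nat h))
    rw [sum_range_succ]
    refine (ih.add step).congr_fun fun n => ?_
    rw [add_right_comm n 1 h, ← add_assoc]
    ring

theorem HasSum.sum_antidiagonal {A α : Type*} [AddMonoid A] [HasAntidiagonal A]
    [AddCommMonoid α] [TopologicalSpace α] [ContinuousAdd α] [RegularSpace α]
    {f : A × A → α} {a : α} (hf : HasSum f a) :
    HasSum (fun n => ∑ p ∈ antidiagonal n, f p) a :=
  (HasAntidiagonal.sigmaAntidiagonalEquivProd.hasSum_iff.2 hf).sigma fun n => by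
    rw [← Finset.sum_coe_sort]
    exact hasSum_fintype _

theorem Finset.Nat.sum_antidiagonal_fst {M : Type*} [AddCommMonoid M] (g : ℕ → M) (n : ℕ) :
    ∑ p ∈ antidiagonal n, g p.1 = ∑ k ∈ range (n + 1), g k :=
  Finset.Nat.sum_antidiagonal_eq_sum_range_succ (fun i _ => g i) n

theorem Finset.Nat.sum_antidiagonal_snd {M : Type*} [AddCommMonoid M] (g : ℕ → M) (n : ℕ) :
    ∑ p ∈ antidiagonal n, g p.2 = ∑ k ∈ range (n + 1), g k := by
  rw [← Finset.Nat.sum_antidiagonal_swap]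
  exact Finset.Nat.sum_antidiagonal_fst g n

theorem inv_mul_inv_mul_inv_add_le {x y : ℝ} (hx : 0 < x) (hy : 0 < y) :
    x⁻¹ * y⁻¹ * (x + y)⁻¹ ≤ (x ^ (3 / 2 : ℝ))⁻¹ * (y ^ (3 / 2 : ℝ))⁻¹ := by
  have hpow : ∀ z : ℝ, 0 < z → z ^ (3 / 2 : ℝ) = z * √z := fun z hz => by
    rw [show (3 / 2 : ℝ) = 1 + 1 / 2 by norm_num, Real.rpow_add hz, Real.rpow_one,
      Real.sqrt_eq_rpow]
  have amgm : √x * √y ≤ x + y := by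
    nlinarith [sq_nonneg (√x - √y), Real.sq_sqrt hx.le, Real.sq_sqrt hy.le]
  rw [hpow x hx, hpow y hy, ← mul_inv, ← mul_inv, ← mul_inv]
  refine inv_anti₀ (by positivity) ?_
  calc x * √x * (y * √y) = x * y * (√x * √y) := by ring
    _ ≤ x * y * (x + y) := by gcongr

theorem summable_inv_mul_inv_mul_inv_add :
    Summable fun p : ℕ × ℕ =>
      ((p.1 : ℝ) + 1)⁻¹ * ((p.2 : ℝ) + 1)⁻¹ * (((p.1 : ℝ) + 1) + ((p.2 : ℝ) + 1))⁻¹ := by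
  have h : Summable fun n : ℕ => (((n : ℝ) + 1) ^ (3 / 2 : ℝ))⁻¹ := by
    simpa using (summable_nat_add_iff 1).2 (Real.summable_nat_rpow_inv.2 (by norm_num))
  exact .of_nonneg_of_le (fun p => by positivity)
    (fun p => inv_mul_inv_mul_inv_add_le (by positivity) (by positivity))
    (h.mul_of_nonneg h (fun n => by positivity) fun n => by positivity)

namespace MultipleTValue

noncomputable def oddInv (n : ℕ) : ℝ := (2 * n + 1)⁻¹

noncomputable def evenInv (n : ℕ) : ℝ := (2 * n + 2)⁻¹

noncomputable def oddHarmonic (n : ℕ) : ℝ := ∑ k ∈ range n, oddInv k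

noncomputable def evenHarmonic (n : ℕ) : ℝ := ∑ k ∈ range n, evenInv k

theorem oddInv_nonneg (n : ℕ) : 0 ≤ oddInv n := by unfold oddInv; positivity

theorem evenInv_nonneg (n : ℕ) : 0 ≤ evenInv n := by unfold evenInv; positivity

theorem oddInv_le (n : ℕ) : oddInv n ≤ ((n : ℝ) + 1)⁻¹ :=
  inv_anti₀ (by positivity) (by linarith [(n.cast_nonneg : (0 : ℝ) ≤ n)])

theorem evenInv_le (n : ℕ) : evenInv n ≤ ((n : ℝ) + 1)⁻¹ :=
  inv_anti₀ (by positivity) (by linarith [(n.cast_nonneg : (0 : ℝ) ≤ n)])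

theorem evenInv_le_oddInv (n : ℕ) : evenInv n ≤ oddInv n :=
  inv_anti₀ (by positivity) (by linarith)

theorem antitone_oddInv : Antitone oddInv := fun _ _ h => inv_anti₀ (by positivity) (by gcongr)

theorem antitone_evenInv : Antitone evenInv := fun _ _ h => inv_anti₀ (by positivity) (by gcongr)

theorem tendsto_oddInv : Tendsto oddInv atTop (𝓝 0) :=
  tendsto_inv_atTop_zero.comp <| tendsto_atTop_add_const_right _ 1 <|
    tendsto_natCast_atTop_atTop.const_mul_atTop two_pos

theorem tendsto_evenInv : Tendsto evenInv atTop (𝓝 0) :=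
  tendsto_inv_atTop_zero.comp <| tendsto_atTop_add_const_right _ 2 <|
    tendsto_natCast_atTop_atTop.const_mul_atTop two_pos

theorem summable_oddInv_pow {k : ℕ} (hk : 1 < k) : Summable fun n => oddInv n ^ k := by
  have h := (summable_nat_add_iff 1).2 (Real.summable_nat_pow_inv.2 hk)
  push_cast at h
  refine .of_nonneg_of_le (fun n => pow_nonneg (oddInv_nonneg n) k) (fun n => ?_) h
  rw [← inv_pow]
  exact pow_le_pow_left₀ (oddInv_nonneg n) (oddInv_le n) k

theorem sum_range_oddInv_sub_evenInv (N : ℕ) :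
    ∑ n ∈ range N, (oddInv n - evenInv n) = (harmonic (2 * N) : ℝ) - harmonic N := by
  induction N with
  | zero => simp
  | succ N ih =>
    rw [sum_range_succ, ih, show 2 * (N + 1) = 2 * N + 1 + 1 by ring, harmonic_succ,
      harmonic_succ, harmonic_succ]
    simp only [oddInv, evenInv]
    push_cast
    field_simp
    ring

theorem hasSum_oddInv_sub_evenInv : HasSum (fun n => oddInv n - evenInv n) (Real.log 2) := by
  rw [hasSum_iff_tendsto_nat_of_nonneg fun n => sub_nonneg.2 (evenInv_le_oddInv n)]
  simp_rw [sum_range_oddInv_sub_evenInv]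
  have hdouble := Real.tendsto_harmonic_sub_log.comp
    (tendsto_atTop_mono (fun n => Nat.le_mul_of_pos_left n two_pos) tendsto_id)
  have hlim := ((hdouble.sub Real.tendsto_harmonic_sub_log).add_const (Real.log 2))
  rw [sub_self, zero_add] at hlim
  refine hlim.congr' ?_
  filter_upwards [eventually_ne_atTop 0] with N hN
  simp only [Function.comp_apply, Nat.cast_mul, Nat.cast_ofNat]
  rw [Real.log_mul two_ne_zero (Nat.cast_ne_zero.2 hN)]
  ring

theorem hasSum_oddInv_sub_oddInv_add (h : ℕ) :
    HasSum (fun n => oddInv n - oddInv (n + h)) (oddHarmonic h) :=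
  antitone_oddInv.hasSum_sub_add tendsto_oddInv h

theorem hasSum_evenInv_sub_evenInv_add (h : ℕ) :
    HasSum (fun n => evenInv n - evenInv (n + h)) (evenHarmonic h) :=
  antitone_evenInv.hasSum_sub_add tendsto_evenInv h

-- The summands `1 / (m n (m + n))` of the Mordell–Tornheim sum at `m = 2i + 1` and
-- `n = 2j + 2`, resp. `n = 2j + 1`.
noncomputable def tornheimOddEven (p : ℕ × ℕ) : ℝ :=
  oddInv p.1 * evenInv p.2 * oddInv (p.1 + p.2 + 1)

noncomputable def tornheimOddOdd (p : ℕ × ℕ) : ℝ :=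
  oddInv p.1 * oddInv p.2 * evenInv (p.1 + p.2)

theorem tornheimOddEven_eq_row (i j : ℕ) : tornheimOddEven (i, j) =
    oddInv i ^ 2 * ((oddInv j - oddInv (j + (i + 1))) - (oddInv j - evenInv j)) := by
  simp only [tornheimOddEven, oddInv, evenInv]; push_cast; field_simp; ring

theorem tornheimOddEven_eq_col (i j : ℕ) :
    tornheimOddEven (i, j) = evenInv j ^ 2 * (oddInv i - oddInv (i + (j + 1))) := by
  simp only [tornheimOddEven, oddInv, evenInv]; push_cast; field_simp; ring

theorem tornheimOddEven_eq_diag (i j : ℕ) :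
    tornheimOddEven (i, j) = oddInv (i + j + 1) ^ 2 * (oddInv i + evenInv j) := by
  simp only [tornheimOddEven, oddInv, evenInv]; push_cast; field_simp; ring

theorem tornheimOddOdd_eq_row (i j : ℕ) : tornheimOddOdd (i, j) =
    oddInv i ^ 2 * ((oddInv j - evenInv j) + (evenInv j - evenInv (j + i))) := by
  simp only [tornheimOddOdd, oddInv, evenInv]; push_cast; field_simp; ring

theorem tornheimOddOdd_eq_diag (i j : ℕ) :
    tornheimOddOdd (i, j) = evenInv (i + j) ^ 2 * (oddInv i + oddInv j) := by
  simp only [tornheimOddOdd, oddInv, evenInv]; push_cast; field_simp; ring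

theorem summable_tornheimOddEven : Summable tornheimOddEven := by
  refine summable_inv_mul_inv_mul_inv_add.of_nonneg_of_le (fun p => ?_) (fun ⟨i, j⟩ => ?_)
  · unfold tornheimOddEven oddInv evenInv; positivity
  · unfold tornheimOddEven
    refine mul_le_mul (mul_le_mul (oddInv_le i) (evenInv_le j) (evenInv_nonneg j) (by positivity))
      ?_ (oddInv_nonneg _) (by positivity)
    exact inv_anti₀ (by positivity) (by push_cast; linarith)

theorem summable_tornheimOddOdd : Summable tornheimOddOdd := by
  refine summable_inv_mul_inv_mul_inv_add.of_nonneg_of_le (fun p => ?_) (fun ⟨i, j⟩ => ?_)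
  · unfold tornheimOddOdd oddInv evenInv; positivity
  · unfold tornheimOddOdd
    refine mul_le_mul (mul_le_mul (oddInv_le i) (oddInv_le j) (oddInv_nonneg j) (by positivity))
      ?_ (evenInv_nonneg _) (by positivity)
    exact inv_anti₀ (by positivity) (by push_cast; linarith)

theorem hasSum_tornheimOddEven_rows :
    HasSum (fun i => oddInv i ^ 2 * (oddHarmonic (i + 1) - Real.log 2))
      (∑' p, tornheimOddEven p) :=
  summable_tornheimOddEven.hasSum.prod_fiberwise fun i => by
    simpa only [tornheimOddEven_eq_row] using
      ((hasSum_oddInv_sub_oddInv_add (i + 1)).sub hasSum_oddInv_sub_evenInv).mul_left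
        (oddInv i ^ 2)

theorem hasSum_tornheimOddEven_cols : HasSum (fun j => evenInv j ^ 2 * oddHarmonic (j + 1))
    (∑' p, tornheimOddEven p) :=
  ((Equiv.prodComm ℕ ℕ).hasSum_iff.2 summable_tornheimOddEven.hasSum).prod_fiberwise fun j => by
    simpa only [Function.comp_apply, Equiv.prodComm_apply, Prod.swap_prod_mk,
      tornheimOddEven_eq_col] using
      (hasSum_oddInv_sub_oddInv_add (j + 1)).mul_left (evenInv j ^ 2)

theorem sum_antidiagonal_tornheimOddEven (n : ℕ) : ∑ p ∈ antidiagonal n, tornheimOddEven p =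
    oddInv (n + 1) ^ 2 * (oddHarmonic (n + 1) + evenHarmonic (n + 1)) := by
  calc ∑ p ∈ antidiagonal n, tornheimOddEven p
      = ∑ p ∈ antidiagonal n, oddInv (n + 1) ^ 2 * (oddInv p.1 + evenInv p.2) :=
        sum_congr rfl fun p hp => by
          rw [← HasAntidiagonal.mem_antidiagonal.1 hp]; exact tornheimOddEven_eq_diag p.1 p.2
    _ = _ := by
      rw [← mul_sum, sum_add_distrib, Nat.sum_antidiagonal_fst, Nat.sum_antidiagonal_snd]; rfl

theorem sum_antidiagonal_tornheimOddOdd (n : ℕ) : ∑ p ∈ antidiagonal n, tornheimOddOdd p =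
    evenInv n ^ 2 * (2 * oddHarmonic (n + 1)) := by
  calc ∑ p ∈ antidiagonal n, tornheimOddOdd p
      = ∑ p ∈ antidiagonal n, evenInv n ^ 2 * (oddInv p.1 + oddInv p.2) :=
        sum_congr rfl fun p hp => by
          rw [← HasAntidiagonal.mem_antidiagonal.1 hp]; exact tornheimOddOdd_eq_diag p.1 p.2
    _ = _ := by
      rw [← mul_sum, sum_add_distrib, Nat.sum_antidiagonal_fst, Nat.sum_antidiagonal_snd, two_mul]
      rfl

theorem hasSum_tornheimOddEven_diags :
    HasSum (fun m => oddInv m ^ 2 * (oddHarmonic m + evenHarmonic m))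
      (∑' p, tornheimOddEven p) := by
  refine (hasSum_nat_add_iff' 1).1 ?_
  simpa [oddHarmonic, evenHarmonic, sum_antidiagonal_tornheimOddEven] using
    summable_tornheimOddEven.hasSum.sum_antidiagonal

theorem hasSum_tornheimOddOdd_rows :
    HasSum (fun i => oddInv i ^ 2 * (Real.log 2 + evenHarmonic i)) (∑' p, tornheimOddOdd p) :=
  summable_tornheimOddOdd.hasSum.prod_fiberwise fun i => by
    simpa only [tornheimOddOdd_eq_row] using
      (hasSum_oddInv_sub_evenInv.add (hasSum_evenInv_sub_evenInv_add i)).mul_left (oddInv i ^ 2)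

theorem hasSum_tornheimOddOdd_diags :
    HasSum (fun n => evenInv n ^ 2 * (2 * oddHarmonic (n + 1))) (∑' p, tornheimOddOdd p) := by
  simpa only [sum_antidiagonal_tornheimOddOdd] using
    summable_tornheimOddOdd.hasSum.sum_antidiagonal

def oddSingletonEquiv :
    ℕ ≃ {f : Fin 1 → ℕ // StrictAnti f ∧ ∀ i, 0 < f i ∧ f i % 2 = 1 % 2} where
  toFun n := ⟨![2 * n + 1], by simp⟩
  invFun f := f.1 0 / 2
  left_inv n := by simp only [Matrix.cons_val_fin_one]; omega
  right_inv f := by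
    have := f.2.2 0
    ext i
    fin_cases i
    simp only [Fin.zero_eta, Matrix.cons_val_fin_one]
    omega

def oddPairEquiv :
    (Σ m : ℕ, Fin m) ≃ {f : Fin 2 → ℕ // StrictAnti f ∧ ∀ i, 0 < f i ∧ f i % 2 = 1 % 2} where
  toFun x := ⟨![2 * x.1 + 1, 2 * x.2 + 1], by
    refine ⟨by simp, fun i => ?_⟩
    fin_cases i <;> simp⟩
  invFun f := ⟨f.1 0 / 2, f.1 1 / 2, by
    have := f.2.1 (show (0 : Fin 2) < 1 by decide)
    have := f.2.2 0
    have := f.2.2 1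
    omega⟩
  left_inv := by
    rintro ⟨m, k, hk⟩
    have hm : (2 * m + 1) / 2 = m := by omega
    simp only [Sigma.mk.injEq, Matrix.cons_val_zero, Matrix.cons_val_one, Matrix.cons_val_fin_one]
    refine ⟨hm, (Fin.heq_ext_iff hm).2 (by simp only; omega)⟩
  right_inv f := by
    have h0 := f.2.2 0
    have h1 := f.2.2 1
    ext i
    fin_cases i <;>
      simp only [Fin.zero_eta, Fin.mk_one, Matrix.cons_val_zero, Matrix.cons_val_one,
        Matrix.cons_val_fin_one] <;>
      omega

theorem tv_two_one_singleton (k : ℕ) : tv 2 1 [k] = ∑' n, oddInv n ^ k :=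
  ((oddSingletonEquiv.tsum_eq _).symm).trans <| tsum_congr fun n => by
    simp [oddSingletonEquiv, oddInv, inv_pow]

theorem tv_two_one_pair (k₁ k₂ : ℕ) :
    tv 2 1 [k₁, k₂] = ∑' x : Σ m : ℕ, Fin m, oddInv x.1 ^ k₁ * oddInv x.2 ^ k₂ :=
  ((oddPairEquiv.tsum_eq _).symm).trans <| tsum_congr fun n => by
    simp [oddPairEquiv, oddInv, inv_pow, Fin.prod_univ_two, mul_comm]

theorem oddHarmonic_nonneg (n : ℕ) : 0 ≤ oddHarmonic n := sum_nonneg fun k _ => oddInv_nonneg k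

theorem evenHarmonic_nonneg (n : ℕ) : 0 ≤ evenHarmonic n := sum_nonneg fun k _ => evenInv_nonneg k

theorem hasSum_tv_two_one_singleton {k : ℕ} (hk : 1 < k) :
    HasSum (fun n => oddInv n ^ k) (tv 2 1 [k]) := by
  rw [tv_two_one_singleton]
  exact (summable_oddInv_pow hk).hasSum

theorem hasSum_tv_two_one_two_one :
    HasSum (fun m => oddInv m ^ 2 * oddHarmonic m) (tv 2 1 [2, 1]) := by
  have hfiber (m : ℕ) :
      HasSum (fun k : Fin m => oddInv m ^ 2 * oddInv k ^ 1) (oddInv m ^ 2 * oddHarmonic m) := by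
    rw [oddHarmonic, mul_sum, ← Fin.sum_univ_eq_sum_range]
    simpa using hasSum_fintype (fun k : Fin m => oddInv m ^ 2 * oddInv k)
  have hsummable : Summable fun m => oddInv m ^ 2 * oddHarmonic m :=
    hasSum_tornheimOddEven_diags.summable.of_nonneg_of_le
      (fun m => mul_nonneg (sq_nonneg _) (oddHarmonic_nonneg m))
      (fun m => mul_le_mul_of_nonneg_left (le_add_of_nonneg_right (evenHarmonic_nonneg m))
        (sq_nonneg _))
  have hsigma : Summable fun x : Σ m : ℕ, Fin m => oddInv x.1 ^ 2 * oddInv x.2 ^ 1 :=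
    (summable_sigma_of_nonneg fun x =>
        mul_nonneg (sq_nonneg _) (pow_nonneg (oddInv_nonneg _) 1)).2
      ⟨fun m => (hfiber m).summable, by simpa only [(hfiber _).tsum_eq] using hsummable⟩
  rw [tv_two_one_pair]
  exact hsigma.hasSum.sigma hfiber

end MultipleTValue

open MultipleTValue

/-- Weighted sum formula in weight 3 for multiple t-values:
`t(3) + 2t(2,1) = 2t(2)log 2`. -/
theorem stmt9 : tv 2 1 [3] + 2 * tv 2 1 [2, 1] = 2 * tv 2 1 [2] * Real.log 2 := by
  set W := ∑' p, tornheimOddEven p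
  set Z := ∑' p, tornheimOddOdd p
  have h2 := hasSum_tv_two_one_singleton one_lt_two
  have h3 := hasSum_tv_two_one_singleton (by norm_num : 1 < 3)
  have h21 := hasSum_tv_two_one_two_one
  have hZ_eq_two_W : Z = 2 * W := hasSum_tornheimOddOdd_diags.unique <| by
    simpa only [mul_left_comm] using hasSum_tornheimOddEven_cols.mul_left 2
  have hW_rows : W = tv 2 1 [2, 1] + tv 2 1 [3] - tv 2 1 [2] * Real.log 2 :=
    hasSum_tornheimOddEven_rows.unique <|
      ((h21.add h3).sub (h2.mul_right _)).congr_fun fun m => by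
        rw [oddHarmonic, sum_range_succ, ← oddHarmonic]
        ring
  have hq : HasSum (fun m => oddInv m ^ 2 * evenHarmonic m) (W - tv 2 1 [2, 1]) :=
    (hasSum_tornheimOddEven_diags.sub h21).congr_fun fun m => by ring
  have hZ_rows : Z = Real.log 2 * tv 2 1 [2] + (W - tv 2 1 [2, 1]) :=
    hasSum_tornheimOddOdd_rows.unique <| ((h2.mul_left _).add hq).congr_fun fun m => by ring
  linarith
end

section
/- Let N be a positive integer, let a be an integer with 1 ≤ a ≤ N, let r be a real number, and let (k_1,…,k_n) be an index of positive integers. Then for real z with 0 < z < 1, the function z ↦ L^r_{N,a}(k_1,…,k_n;z) is differentiable and its derivative equals: (1/z)·L^r_{N,a}(k_1−1,k_2,…,k_n;z) if k_1 > 1; (r/z + z^{N−1}/(1−z^N))·L^r_{N,a}(k_2,…,k_n;z) if k_1 = 1 and n ≥ 2; and z^{a−1}/(1−z^N) if k_1 = n = 1. -/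
/-- All groupings of an index obtained by replacing each box in
`k₁ □ k₂ □ ⋯ □ kₙ` by a comma (new block) or a plus (merge). -/
def groupings : List ℕ → List (List ℕ)
  | [] => [[]]
  | [x] => [[x]]
  | x :: y :: rest => ((groupings (y :: rest)).map (x :: ·)) ++ groupings ((x + y) :: rest)
termination_by l => l.length

/-- The one-variable function
`L_{N,a}(k; z) = Σ_{m₁ > ⋯ > mₙ > 0, mᵢ ≡ a (mod N)} z^{m₁}/(m₁^{k₁} ⋯ mₙ^{kₙ})`. -/
noncomputable def Lv (N a : ℕ) (k : List ℕ) (z : ℝ) : ℝ :=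
  ∑' m : {f : Fin k.length → ℕ // StrictAnti f ∧ ∀ i, 0 < f i ∧ f i % N = a % N},
    (if h : 0 < k.length then z ^ (m.1 ⟨0, h⟩) else 1) *
      ∏ i : Fin k.length, ((m.1 i : ℝ) ^ k.get i)⁻¹

/-- The interpolated function `L^r_{N,a}(k; z) = Σ_p r^{n - dep(p)} L_{N,a}(p; z)`
over all groupings `p` of `k`. -/
noncomputable def iLv (N a : ℕ) (r : ℝ) (k : List ℕ) (z : ℝ) : ℝ :=
  ((groupings k).map (fun p => r ^ (k.length - p.length) * Lv N a p z)).sum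

/-!
Each `Lv N a (k :: t)` is a power series in `z` whose coefficient of `z ^ m` is a sum over the
tuples with first entry `m`; there are at most `m ^ n` of them and each contributes a weight
`∏ mᵢ ^ (-kᵢ)` in `[0, 1]`, so the series can be differentiated term by term for `|z| < 1`. Differentiating
`z ^ m₁ / m₁ ^ (k + 1)` gives `1/z` times `z ^ m₁ / m₁ ^ k`. When `k₁ = 1` the factor `m₁` cancels,
and summing `z ^ (m₁ - 1)` over `m₁ = m₂ + N, m₂ + 2N, …` (over `m₁ = a, a + N, …` in depth one)
is a geometric series equal to `z ^ m₂ · z ^ (N - 1) / (1 - z ^ N)`.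

For `L^r`, the groupings of `(k₁ + 1, k₂, …)` are those of `(k₁, k₂, …)` with the first block
raised by one, while the groupings of `(1, k₂, …)` are those starting with the block `1`,
followed by those of `(1 + k₂, k₃, …)`, which carry one extra factor `r`.
-/

section FiberCount

variable {ι : Type*} (F : ι → ℕ) {d : ℕ}

theorem summable_pow_mul_geometric_comp (hfin : ∀ m, Finite {i // F i = m})
    (hcard : ∀ m, Nat.card {i // F i = m} ≤ m ^ d) (q : ℕ) {b : ℝ} (hb0 : 0 ≤ b) (hb1 : b < 1) :
    Summable fun i => (F i : ℝ) ^ q * b ^ F i := by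
  set u : ℕ → ℝ := fun m => (m : ℝ) ^ q * b ^ m
  have hu : ∀ m, 0 ≤ u m := fun m => by positivity
  have hfiber (m : ℕ) : ∑' i : {i // F i = m}, u (F i) = Nat.card {i // F i = m} * u m := by
    rw [tsum_congr fun i : {i // F i = m} => congrArg u i.2, tsum_const, nsmul_eq_mul]
  have hdom : Summable fun m : ℕ => (m : ℝ) ^ (d + q) * b ^ m :=
    summable_pow_mul_geometric_of_norm_lt_one _ (by rwa [Real.norm_of_nonneg hb0])
  change Summable (u ∘ F)
  refine (Equiv.sigmaFiberEquiv F).summable_iff.mp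
    ((summable_sigma_of_nonneg (f := (u ∘ F) ∘ _) fun _ => hu _).mpr
      ⟨fun m => @Summable.of_finite _ _ _ _ _ (hfin m) _ _, ?_⟩)
  refine hdom.of_nonneg_of_le (fun m => tsum_nonneg fun _ => hu _) fun m => ?_
  calc ∑' i : {i // F i = m}, u (F i) = Nat.card {i // F i = m} * u m := hfiber m
    _ ≤ (m : ℝ) ^ d * u m := by gcongr; exact_mod_cast hcard m
    _ = (m : ℝ) ^ (d + q) * b ^ m := by rw [pow_add]; ring

theorem summable_norm_pow_mul_comp (hfin : ∀ m, Finite {i // F i = m})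
    (hcard : ∀ m, Nat.card {i // F i = m} ≤ m ^ d) {w : ι → ℝ} (hw : ∀ i, ‖w i‖ ≤ 1)
    {z : ℝ} (hz : |z| < 1) :
    Summable fun i => ‖z ^ F i * w i‖ := by
  refine (summable_pow_mul_geometric_comp F hfin hcard 0 (abs_nonneg z) hz).of_nonneg_of_le
    (fun _ => norm_nonneg _) fun i => ?_
  rw [norm_mul, norm_pow, Real.norm_eq_abs, pow_zero, one_mul]
  exact mul_le_of_le_one_right (by positivity) (hw i)

theorem hasDerivAt_tsum_pow_mul_comp (hfin : ∀ m, Finite {i // F i = m})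
    (hcard : ∀ m, Nat.card {i // F i = m} ≤ m ^ d) {w : ι → ℝ} (hw : ∀ i, ‖w i‖ ≤ 1)
    {z : ℝ} (hz : |z| < 1) :
    HasDerivAt (fun t => ∑' i, t ^ F i * w i) (∑' i, (F i : ℝ) * z ^ (F i - 1) * w i) z := by
  obtain ⟨b, hzb, hb1⟩ := exists_between hz
  have hb0 : 0 < b := (abs_nonneg z).trans_lt hzb
  have hbound : Summable fun i => b⁻¹ * ((F i : ℝ) ^ 1 * b ^ F i) :=
    (summable_pow_mul_geometric_comp F hfin hcard 1 hb0.le hb1).mul_left _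
  refine hasDerivAt_tsum_of_isPreconnected (g' := fun i y => (F i : ℝ) * y ^ (F i - 1) * w i)
    hbound Metric.isOpen_ball (convex_ball 0 b).isPreconnected
    (fun i y _ => (hasDerivAt_pow (F i) y).mul_const (w i)) (fun i y hy => ?_)
    (mem_ball_zero_iff.mpr hzb) (summable_norm_pow_mul_comp F hfin hcard hw hz).of_norm
    (mem_ball_zero_iff.mpr hzb)
  have hyb : |y| ≤ b := (mem_ball_zero_iff.mp hy).le
  have hpow : (F i : ℝ) * b ^ (F i - 1) = b⁻¹ * ((F i : ℝ) ^ 1 * b ^ F i) := by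
    rcases Nat.eq_zero_or_pos (F i) with h | h
    · simp [h]
    · rw [pow_one, ← Nat.sub_add_cancel h, pow_succ, Nat.add_sub_cancel]
      field_simp
  rw [← hpow, norm_mul, norm_mul, Real.norm_natCast, norm_pow, Real.norm_eq_abs]
  calc (F i : ℝ) * |y| ^ (F i - 1) * ‖w i‖ ≤ (F i : ℝ) * b ^ (F i - 1) * 1 := by
        gcongr
        exact hw i
    _ = (F i : ℝ) * b ^ (F i - 1) := mul_one _

end FiberCount

theorem Nat.exists_eq_add_succ_mul_of_mod_eq {N b m : ℕ} (hbm : b < m) (hmod : m % N = b % N) :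
    ∃ j, m = b + (j + 1) * N := by
  obtain ⟨q, hq⟩ := (Nat.modEq_iff_dvd' hbm.le).mp hmod.symm
  obtain ⟨j, rfl⟩ := Nat.exists_eq_add_one_of_ne_zero (show q ≠ 0 by rintro rfl; omega)
  exact ⟨j, by rw [Nat.mul_comm] at hq; omega⟩

abbrev DecTuple (N a n : ℕ) : Type :=
  {f : Fin n → ℕ // StrictAnti f ∧ ∀ i, 0 < f i ∧ f i % N = a % N}

namespace DecTuple

variable {N a n : ℕ}

theorem pos (s : DecTuple N a n) (i : Fin n) : 0 < s.1 i := (s.2.2 i).1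

theorem apply_le_apply_zero (s : DecTuple N a (n + 1)) (i : Fin (n + 1)) : s.1 i ≤ s.1 0 :=
  s.2.1.antitone (Fin.zero_le i)

/-- Entries of a tuple with first entry `m` lie in `[1, m]`, which bounds the fibres of
`s ↦ s 0`. -/
def fiberEmbedding (m : ℕ) : {s : DecTuple N a (n + 1) // s.1 0 = m} → (Fin (n + 1) → Fin m) :=
  fun s i => ⟨s.1.1 i - 1, by
    have := s.1.pos i; have := s.1.apply_le_apply_zero i; have := s.2; omega⟩

theorem fiberEmbedding_injective (m : ℕ) :
    Function.Injective (fiberEmbedding (N := N) (a := a) (n := n) m) := by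
  intro s s' h
  refine Subtype.ext (Subtype.ext (funext fun i => ?_))
  have := congrArg Fin.val (congrFun h i)
  have := s.1.pos i
  have := s'.1.pos i
  simp only [fiberEmbedding] at *
  omega

theorem finite_fiber (m : ℕ) : Finite {s : DecTuple N a (n + 1) // s.1 0 = m} :=
  Finite.of_injective _ (fiberEmbedding_injective m)

theorem card_fiber_le (m : ℕ) :
    Nat.card {s : DecTuple N a (n + 1) // s.1 0 = m} ≤ m ^ (n + 1) := by
  simpa using
    Nat.card_le_card_of_injective _ (fiberEmbedding_injective (N := N) (a := a) (n := n) m)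

noncomputable def consEquiv (hN : 1 ≤ N) : DecTuple N a (n + 1) × ℕ ≃ DecTuple N a (n + 2) :=
  Equiv.ofBijective
    (fun p => ⟨Matrix.vecCons (p.1.1 0 + (p.2 + 1) * N) p.1.1,
      p.1.2.1.vecCons (Nat.lt_add_of_pos_right (Nat.mul_pos p.2.succ_pos hN)),
      Fin.forall_fin_succ.mpr
        ⟨⟨Nat.lt_of_lt_of_le (p.1.pos 0) (Nat.le_add_right _ _), by simpa using (p.1.2.2 0).2⟩,
          by simpa using p.1.2.2⟩⟩)
    ⟨fun p p' h => by
      have htail : p.1 = p'.1 :=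
        Subtype.ext (funext fun i => congrFun (congrArg Subtype.val h) i.succ)
      have hhead := congrFun (congrArg Subtype.val h) 0
      simp only [Matrix.cons_val_zero, htail] at hhead
      exact Prod.ext htail
        (Nat.succ_injective (Nat.eq_of_mul_eq_mul_right hN (Nat.add_left_cancel hhead))),
    fun s => by
      have hs : s.1 = Matrix.vecCons (s.1 0) (Fin.tail s.1) := (Fin.cons_self_tail s.1).symm
      obtain ⟨hlt, htail⟩ := strictAnti_vecCons.mp (hs ▸ s.2.1)
      obtain ⟨j, hj⟩ := Nat.exists_eq_add_succ_mul_of_mod_eq hlt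
        (((s.2.2 0).2).trans ((s.2.2 1).2).symm)
      refine ⟨(⟨Fin.tail s.1, htail, fun i => s.2.2 i.succ⟩, j), Subtype.ext ?_⟩
      change Matrix.vecCons (Fin.tail s.1 0 + (j + 1) * N) (Fin.tail s.1) = s.1
      rw [← hj]
      exact Fin.cons_self_tail s.1⟩

noncomputable def singletonEquiv (hN : 1 ≤ N) (ha1 : 1 ≤ a) (ha2 : a ≤ N) :
    ℕ ≃ DecTuple N a 1 :=
  Equiv.ofBijective
    (fun j => ⟨fun _ => a + j * N, Subsingleton.strictAnti _,
      fun _ => ⟨Nat.lt_of_lt_of_le ha1 (Nat.le_add_right _ _), Nat.add_mul_mod_self_right a j N⟩⟩)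
    ⟨fun j j' h =>
      Nat.eq_of_mul_eq_mul_right hN (by simpa using congrFun (congrArg Subtype.val h) 0),
    fun s => by
      obtain ⟨j, hj⟩ := Nat.exists_eq_add_succ_mul_of_mod_eq (b := a) (m := s.1 0 + N)
        (by have := s.pos 0; omega) (by rw [Nat.add_mod_right]; exact (s.2.2 0).2)
      refine ⟨j, Subtype.ext (funext fun i => ?_)⟩
      rw [Subsingleton.elim i 0]
      change a + j * N = s.1 0
      rw [Nat.add_mul] at hj
      omega⟩

end DecTuple

namespace Lv

variable {N a : ℕ} {z : ℝ}

noncomputable def weight (k : List ℕ) (f : Fin k.length → ℕ) : ℝ :=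
  ∏ i, ((f i : ℝ) ^ k.get i)⁻¹

theorem weight_nil (f : Fin 0 → ℕ) : weight [] f = 1 :=
  Fin.prod_univ_zero _

theorem weight_cons (h : ℕ) (t : List ℕ) (f : Fin (t.length + 1) → ℕ) :
    weight (h :: t) f = ((f 0 : ℝ) ^ h)⁻¹ * weight t (Fin.tail f) :=
  Fin.prod_univ_succ _

theorem norm_weight_le_one {k : List ℕ} (s : DecTuple N a k.length) : ‖weight k s.1‖ ≤ 1 := by
  unfold weight
  rw [Real.norm_of_nonneg (Finset.prod_nonneg fun i _ => by positivity)]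
  refine Finset.prod_le_one (fun i _ => by positivity) fun i _ => inv_le_one_of_one_le₀ ?_
  exact one_le_pow₀ (by exact_mod_cast s.pos i)

theorem cons_eq_tsum (h : ℕ) (t : List ℕ) (z : ℝ) :
    Lv N a (h :: t) z = ∑' s : DecTuple N a (t.length + 1), z ^ s.1 0 * weight (h :: t) s.1 :=
  tsum_congr fun s => by rw [dif_pos (show 0 < (h :: t).length from Nat.succ_pos _)]; rfl

theorem summable_norm_terms (h : ℕ) (t : List ℕ) (hz : |z| < 1) :
    Summable fun s : DecTuple N a (t.length + 1) => ‖z ^ s.1 0 * weight (h :: t) s.1‖ :=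
  summable_norm_pow_mul_comp _ DecTuple.finite_fiber DecTuple.card_fiber_le
    (fun s => norm_weight_le_one (k := h :: t) s) hz

theorem hasDerivAt_cons (h : ℕ) (t : List ℕ) (hz : |z| < 1) :
    HasDerivAt (Lv N a (h :: t))
      (∑' s : DecTuple N a (t.length + 1),
        (s.1 0 : ℝ) * z ^ (s.1 0 - 1) * weight (h :: t) s.1) z := by
  rw [funext (cons_eq_tsum h t)]
  exact hasDerivAt_tsum_pow_mul_comp _ DecTuple.finite_fiber DecTuple.card_fiber_le
    (fun s => norm_weight_le_one (k := h :: t) s) hz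

theorem hasDerivAt_succ_cons (k : ℕ) (t : List ℕ) (hz0 : z ≠ 0) (hz : |z| < 1) :
    HasDerivAt (Lv N a ((k + 1) :: t)) (1 / z * Lv N a (k :: t) z) z := by
  convert hasDerivAt_cons (k + 1) t hz using 1
  rw [cons_eq_tsum, ← tsum_mul_left]
  refine tsum_congr fun s => ?_
  obtain ⟨m, hm⟩ := Nat.exists_eq_add_one_of_ne_zero (s.pos 0).ne'
  rw [weight_cons, weight_cons, hm]
  push_cast
  field_simp
  ring

theorem hasDerivAt_one_cons (hN : 1 ≤ N) (k : ℕ) (t : List ℕ) (hz : |z| < 1) :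
    HasDerivAt (Lv N a (1 :: k :: t)) (z ^ (N - 1) / (1 - z ^ N) * Lv N a (k :: t) z) z := by
  have hzN : |z ^ N| < 1 := by rw [abs_pow]; exact pow_lt_one₀ (abs_nonneg z) hz (by omega)
  have hgeom : Summable fun j : ℕ => ‖z ^ (N - 1) * (z ^ N) ^ j‖ :=
    ((summable_geometric_of_abs_lt_one hzN).mul_left _).abs
  convert hasDerivAt_cons 1 (k :: t) hz using 1
  symm
  calc ∑' s : DecTuple N a (t.length + 2),
        (s.1 0 : ℝ) * z ^ (s.1 0 - 1) * weight (1 :: k :: t) s.1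
      = ∑' s : DecTuple N a (t.length + 2), z ^ (s.1 0 - 1) * weight (k :: t) (Fin.tail s.1) :=
        tsum_congr fun s => by
          have : (s.1 0 : ℝ) ≠ 0 := by exact_mod_cast (s.pos 0).ne'
          rw [weight_cons, pow_one]
          field_simp
    _ = ∑' p : DecTuple N a (t.length + 1) × ℕ,
          z ^ p.1.1 0 * weight (k :: t) p.1.1 * (z ^ (N - 1) * (z ^ N) ^ p.2) := by
        rw [← (DecTuple.consEquiv hN).tsum_eq]
        refine tsum_congr fun p => ?_
        change z ^ (p.1.1 0 + (p.2 + 1) * N - 1) * weight (k :: t) p.1.1 = _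
        rw [show p.1.1 0 + (p.2 + 1) * N - 1 = p.1.1 0 + (N - 1) + N * p.2 by
          rw [Nat.add_mul, one_mul, Nat.mul_comm]; omega, pow_add, pow_add, pow_mul]
        ring
    _ = Lv N a (k :: t) z * (z ^ (N - 1) / (1 - z ^ N)) := by
        rw [← tsum_mul_tsum_of_summable_norm (summable_norm_terms k t hz) hgeom, ← cons_eq_tsum,
          tsum_mul_left, tsum_geometric_of_abs_lt_one hzN, div_eq_mul_inv]
    _ = z ^ (N - 1) / (1 - z ^ N) * Lv N a (k :: t) z := mul_comm _ _

theorem hasDerivAt_one_nil (hN : 1 ≤ N) (ha1 : 1 ≤ a) (ha2 : a ≤ N) (hz : |z| < 1) :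
    HasDerivAt (Lv N a [1]) (z ^ (a - 1) / (1 - z ^ N)) z := by
  have hzN : |z ^ N| < 1 := by rw [abs_pow]; exact pow_lt_one₀ (abs_nonneg z) hz (by omega)
  convert hasDerivAt_cons 1 [] hz using 1
  symm
  calc ∑' s : DecTuple N a 1, (s.1 0 : ℝ) * z ^ (s.1 0 - 1) * weight [1] s.1
      = ∑' s : DecTuple N a 1, z ^ (s.1 0 - 1) :=
        tsum_congr fun s => by
          have : (s.1 0 : ℝ) ≠ 0 := by exact_mod_cast (s.pos 0).ne'
          rw [weight_cons, pow_one, weight_nil]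
          field_simp
    _ = ∑' j : ℕ, z ^ (a - 1) * (z ^ N) ^ j := by
        rw [← (DecTuple.singletonEquiv hN ha1 ha2).tsum_eq]
        refine tsum_congr fun j => ?_
        change z ^ (a + j * N - 1) = _
        rw [show a + j * N - 1 = a - 1 + N * j by rw [Nat.mul_comm]; omega, pow_add, pow_mul]
    _ = z ^ (a - 1) / (1 - z ^ N) := by
        rw [tsum_mul_left, tsum_geometric_of_abs_lt_one hzN, div_eq_mul_inv]

end Lv

theorem groupings_cons_cons (x y : ℕ) (t : List ℕ) :
    groupings (x :: y :: t) = (groupings (y :: t)).map (x :: ·) ++ groupings ((x + y) :: t) := by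
  rw [groupings]

theorem groupings_succ_cons (x : ℕ) (l : List ℕ) :
    groupings ((x + 1) :: l) = (groupings (x :: l)).map (List.modifyHead (· + 1)) := by
  induction l generalizing x with
  | nil => simp [groupings]
  | cons y t ih =>
    rw [groupings_cons_cons, groupings_cons_cons, List.map_append, List.map_map, Nat.add_right_comm,
      ih]
    rfl

theorem ne_nil_of_mem_groupings_cons {x : ℕ} {l p : List ℕ} (hp : p ∈ groupings (x :: l)) :
    p ≠ [] := by
  induction l generalizing x with
  | nil => simp_all [groupings]
  | cons y t ih =>
    rw [groupings_cons_cons, List.mem_append, List.mem_map] at hp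
    rcases hp with ⟨q, -, rfl⟩ | hp
    · exact List.cons_ne_nil x q
    · exact ih hp

theorem length_le_of_mem_groupings_cons {x : ℕ} {l p : List ℕ} (hp : p ∈ groupings (x :: l)) :
    p.length ≤ l.length + 1 := by
  induction l generalizing x p with
  | nil => simp_all [groupings]
  | cons y t ih =>
    rw [groupings_cons_cons, List.mem_append, List.mem_map] at hp
    rcases hp with ⟨q, hq, rfl⟩ | hp
    · simpa using ih hq
    · simpa using (ih hp).trans (Nat.le_succ _)

theorem hasDerivAt_list_sum_mul {α : Type*} (l : List α) (c : α → ℝ) {f : α → ℝ → ℝ}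
    {g : α → ℝ} {C z : ℝ} (h : ∀ p ∈ l, HasDerivAt (f p) (C * g p) z) :
    HasDerivAt (fun t => (l.map fun p => c p * f p t).sum)
      (C * (l.map fun p => c p * g p).sum) z := by
  induction l with
  | nil => simpa using hasDerivAt_const z (0 : ℝ)
  | cons q l ih =>
    simp only [List.map_cons, List.sum_cons, mul_add, mul_left_comm C]
    exact ((h q List.mem_cons_self).const_mul (c q)).add
      (ih fun p hp => h p (List.mem_cons_of_mem q hp))

namespace iLv

variable {N a : ℕ} {r z : ℝ}

theorem singleton_eq (x : ℕ) : iLv N a r [x] = Lv N a [x] := by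
  funext z
  simp [iLv, groupings]

theorem succ_cons_eq (k : ℕ) (t : List ℕ) (z : ℝ) :
    iLv N a r ((k + 1) :: t) z =
      ((groupings (k :: t)).map fun q =>
        r ^ ((k :: t).length - q.length) * Lv N a (q.modifyHead (· + 1)) z).sum := by
  simp [iLv, groupings_succ_cons, Function.comp_def]

theorem cons_cons_eq (x y : ℕ) (t : List ℕ) (z : ℝ) :
    iLv N a r (x :: y :: t) z =
      ((groupings (y :: t)).map fun q => r ^ ((y :: t).length - q.length) * Lv N a (x :: q) z).sum
        + r * iLv N a r ((x + y) :: t) z := by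
  rw [iLv, groupings_cons_cons, List.map_append, List.sum_append, List.map_map, iLv,
    ← List.sum_map_mul_left]
  congr 1
  · simp [Function.comp_def]
  · refine congrArg List.sum (List.map_congr_left fun p hp => ?_)
    have := length_le_of_mem_groupings_cons hp
    rw [← mul_assoc, ← pow_succ']
    congr 2
    simp only [List.length_cons] at *
    omega

theorem hasDerivAt_succ_cons (k : ℕ) (t : List ℕ) (hz0 : z ≠ 0) (hz : |z| < 1) :
    HasDerivAt (iLv N a r ((k + 1) :: t)) (1 / z * iLv N a r (k :: t) z) z := by
  rw [funext (succ_cons_eq k t)]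
  refine hasDerivAt_list_sum_mul _ _ fun q hq => ?_
  obtain ⟨h, q, rfl⟩ := List.exists_cons_of_ne_nil (ne_nil_of_mem_groupings_cons hq)
  exact Lv.hasDerivAt_succ_cons h q hz0 hz

theorem hasDerivAt_one_cons (hN : 1 ≤ N) (k : ℕ) (t : List ℕ) (hz0 : z ≠ 0) (hz : |z| < 1) :
    HasDerivAt (iLv N a r (1 :: k :: t))
      ((r / z + z ^ (N - 1) / (1 - z ^ N)) * iLv N a r (k :: t) z) z := by
  have hhead : HasDerivAt
      (fun x => ((groupings (k :: t)).map fun q =>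
        r ^ ((k :: t).length - q.length) * Lv N a (1 :: q) x).sum)
      (z ^ (N - 1) / (1 - z ^ N) * iLv N a r (k :: t) z) z := by
    refine hasDerivAt_list_sum_mul _ _ fun q hq => ?_
    obtain ⟨h, q, rfl⟩ := List.exists_cons_of_ne_nil (ne_nil_of_mem_groupings_cons hq)
    exact Lv.hasDerivAt_one_cons hN h q hz
  have htail := (hasDerivAt_succ_cons (N := N) (a := a) (r := r) k t hz0 hz).const_mul r
  rw [funext (cons_cons_eq 1 k t), Nat.add_comm 1 k, show (r / z + z ^ (N - 1) / (1 - z ^ N)) *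
    iLv N a r (k :: t) z = z ^ (N - 1) / (1 - z ^ N) * iLv N a r (k :: t) z +
      r * (1 / z * iLv N a r (k :: t) z) by ring]
  exact hhead.fun_add htail

end iLv

theorem stmt13_general (N : ℕ) (hN : 1 ≤ N) (a : ℕ) (ha1 : 1 ≤ a) (ha2 : a ≤ N) (r : ℝ)
    (k₁ : ℕ) (tl : List ℕ) (z : ℝ) (hz0 : 0 < z) (hz1 : z < 1) :
    (2 ≤ k₁ → HasDerivAt (fun t => iLv N a r (k₁ :: tl) t)
        (1 / z * iLv N a r ((k₁ - 1) :: tl) z) z) ∧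
    (k₁ = 1 → tl ≠ [] → HasDerivAt (fun t => iLv N a r (k₁ :: tl) t)
        ((r / z + z ^ (N - 1) / (1 - z ^ N)) * iLv N a r tl z) z) ∧
    (k₁ = 1 → tl = [] → HasDerivAt (fun t => iLv N a r (k₁ :: tl) t)
        (z ^ (a - 1) / (1 - z ^ N)) z) := by
  have hz : |z| < 1 := by rwa [abs_of_pos hz0]
  refine ⟨fun hk => ?_, ?_, ?_⟩
  · obtain ⟨k, rfl⟩ : ∃ k, k₁ = k + 1 := ⟨k₁ - 1, by omega⟩
    simpa using iLv.hasDerivAt_succ_cons k tl hz0.ne' hz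
  · rintro rfl htl
    obtain ⟨k, t, rfl⟩ := List.exists_cons_of_ne_nil htl
    exact iLv.hasDerivAt_one_cons hN k t hz0.ne' hz
  · rintro rfl rfl
    rw [iLv.singleton_eq]
    exact Lv.hasDerivAt_one_nil hN ha1 ha2 hz

/-- The derivative of `z ↦ L^r_{N,a}(k₁,…,kₙ;z)` on `0 < z < 1`:
it equals `(1/z)L^r_{N,a}(k₁-1,k₂,…,kₙ;z)` if `k₁ > 1`;
`(r/z + z^{N-1}/(1-z^N))L^r_{N,a}(k₂,…,kₙ;z)` if `k₁ = 1` and `n ≥ 2`; and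
`z^{a-1}/(1-z^N)` if `k₁ = n = 1`. -/
theorem stmt13 (N : ℕ) (hN : 1 ≤ N) (a : ℕ) (ha1 : 1 ≤ a) (ha2 : a ≤ N) (r : ℝ)
    (k₁ : ℕ) (tl : List ℕ) (hk₁ : 1 ≤ k₁) (htl : ∀ i ∈ tl, 1 ≤ i)
    (z : ℝ) (hz0 : 0 < z) (hz1 : z < 1) :
    (2 ≤ k₁ → HasDerivAt (fun t => iLv N a r (k₁ :: tl) t)
        (1 / z * iLv N a r ((k₁ - 1) :: tl) z) z) ∧
    (k₁ = 1 → tl ≠ [] → HasDerivAt (fun t => iLv N a r (k₁ :: tl) t)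
        ((r / z + z ^ (N - 1) / (1 - z ^ N)) * iLv N a r tl z) z) ∧
    (k₁ = 1 → tl = [] → HasDerivAt (fun t => iLv N a r (k₁ :: tl) t)
        (z ^ (a - 1) / (1 - z ^ N)) z) :=
  stmt13_general N hN a ha1 ha2 r k₁ tl z hz0 hz1
end
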